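/- arXiv:2106.00298 — 2 statements merged into one kernel-verified Lean document; each statement's English description precedes it below -/
import Mathlib

section
/- Fix z ≥ 0. Let p < q be primes and write h_p := E[B_p], h_q := E[B_q]. If p < q ≤ p^{e^z}, then E[(B_p − h_p)(B_q − h_q)] = −h_p · h_q (in particular E[B_p B_q] = 0), while if q > p^{e^z}, then B_p and B_q are independent and E[(B_p − h_p)(B_q − h_q)] = 0. -/
open MeasureTheory ProbabilityTheory Filter Finset
open scoped Classical ENNReal

/-- The set of primes `q` with `p < q ≤ p ^ (e ^ z)`. -/
noncomputable def primesBetween (z : ℝ) (p : ℕ) : Finset ℕ :=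
  (Finset.range (⌊(p : ℝ) ^ Real.exp z⌋₊ + 1)).filter (fun q => q.Prime ∧ p < q)

/-- The random variable `B_p = X_p · ∏_{p < q ≤ p^{e^z}} (1 - X_q)`. -/
noncomputable def B {Ω : Type*} (z : ℝ) (X : ℕ → Ω → ℝ) (p : ℕ) (ω : Ω) : ℝ :=
  X p ω * ∏ q ∈ primesBetween z p, (1 - X q ω)

/-! Both cases come from the product shape of `B`. If `q ≤ p ^ e ^ z`, then `B p` carries the factor
`1 - X q` and `B q` the factor `X q`, so `B p * B q = 0` almost surely, as `X q` is `{0, 1}`-valued.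
If `q > p ^ e ^ z`, then `B p` is built from the `X r` with `r < q` and `B q` from the `X r` with
`r ≥ q`, and independence of the `X r` makes `B p` and `B q` independent. The variables `B r` take
values in `[0, 1]`, so their covariance is `E[B p B q] - E[B p] E[B q]`. -/

lemma mem_primesBetween {z : ℝ} {p r : ℕ} :
    r ∈ primesBetween z p ↔ r.Prime ∧ p < r ∧ (r : ℝ) ≤ (p : ℝ) ^ Real.exp z := by
  rw [primesBetween, mem_filter, mem_range, Nat.lt_succ_iff,
    Nat.le_floor_iff (by positivity)]
  tauto

lemma prime_of_mem_insert_primesBetween {z : ℝ} {p r : ℕ} (hp : p.Prime)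
    (hr : r ∈ insert p (primesBetween z p)) : r.Prime := by
  rcases mem_insert.1 hr with rfl | hr
  exacts [hp, (mem_primesBetween.1 hr).1]

lemma self_le_of_mem_insert_primesBetween {z : ℝ} {p r : ℕ}
    (hr : r ∈ insert p (primesBetween z p)) : p ≤ r := by
  rcases mem_insert.1 hr with rfl | hr
  exacts [le_rfl, (mem_primesBetween.1 hr).2.1.le]

lemma lt_of_mem_insert_primesBetween {z : ℝ} {p q r : ℕ} (hpq : p < q)
    (hq : (p : ℝ) ^ Real.exp z < q) (hr : r ∈ insert p (primesBetween z p)) : r < q := by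
  rcases mem_insert.1 hr with rfl | hr
  exacts [hpq, by exact_mod_cast (mem_primesBetween.1 hr).2.2.trans_lt hq]

section B

variable {Ω : Type*} {X : ℕ → Ω → ℝ} {z : ℝ} {p : ℕ}

lemma measurable_B {m : MeasurableSpace Ω}
    (hX : ∀ r ∈ insert p (primesBetween z p), Measurable[m] (X r)) :
    Measurable[m] (B z X p) :=
  (hX p (mem_insert_self _ _)).mul <|
    Finset.measurable_prod _ fun r hr => measurable_const.sub (hX r (mem_insert_of_mem hr))

lemma B_mem_unitInterval {ω : Ω}
    (hX : ∀ r ∈ insert p (primesBetween z p), X r ω ∈ unitInterval) :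
    B z X p ω ∈ unitInterval :=
  unitInterval.mul_mem (hX p (mem_insert_self _ _)) <| unitInterval.prod_mem fun r hr =>
    Set.Icc.mem_iff_one_sub_mem.1 (hX r (mem_insert_of_mem hr))

lemma B_mul_B_eq_zero {q : ℕ} {ω : Ω} (hq : q ∈ primesBetween z p)
    (hXq : X q ω = 0 ∨ X q ω = 1) : B z X p ω * B z X q ω = 0 := by
  rcases hXq with h | h
  · simp [B, h]
  · rw [B, prod_eq_zero hq (by rw [h, sub_self]), mul_zero, zero_mul]

end B

lemma measurable_biSup_comap {Ω ι β : Type*} [mβ : MeasurableSpace β] (f : ι → Ω → β)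
    {S : Set ι} {i : ι} (hi : i ∈ S) : Measurable[⨆ j ∈ S, mβ.comap (f j)] (f i) :=
  (comap_measurable (f i)).mono (le_iSup₂ (f := fun j (_ : j ∈ S) => mβ.comap (f j)) i hi) le_rfl

section Probability

variable {Ω : Type*} [MeasurableSpace Ω] {μ : Measure Ω}

lemma ae_eq_zero_or_eq_one [IsProbabilityMeasure μ] {f : Ω → ℝ} (hf : Measurable f) {a : ℝ}
    (ha₀ : 0 ≤ a) (ha₁ : a ≤ 1) (h₁ : μ {ω | f ω = 1} = ENNReal.ofReal a)
    (h₀ : μ {ω | f ω = 0} = ENNReal.ofReal (1 - a)) :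
    ∀ᵐ ω ∂μ, f ω = 0 ∨ f ω = 1 := by
  have hs₀ : MeasurableSet {ω | f ω = 0} := hf (measurableSet_singleton 0)
  have hs₁ : MeasurableSet {ω | f ω = 1} := hf (measurableSet_singleton 1)
  have hdisj : Disjoint {ω | f ω = 0} {ω | f ω = 1} :=
    Set.disjoint_left.2 fun ω h₀ h₁ => zero_ne_one (h₀.symm.trans h₁)
  refine (ae_iff_measure_eq (p := fun ω => f ω = 0 ∨ f ω = 1)
    (hs₀.union hs₁).nullMeasurableSet).2 ?_
  change μ ({ω | f ω = 0} ∪ {ω | f ω = 1}) = _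
  rw [measure_union hdisj hs₁, h₀, h₁, ← ENNReal.ofReal_add (by linarith) ha₀, measure_univ]
  simp

lemma ProbabilityTheory.iIndepFun.indepFun_of_measurable_biSup {ι β γ δ : Type*}
    [mβ : MeasurableSpace β] [MeasurableSpace γ] [MeasurableSpace δ] {f : ι → Ω → β}
    (hf : iIndepFun f μ) (hmeas : ∀ i, Measurable (f i)) {S T : Set ι} (hST : Disjoint S T)
    {F : Ω → γ} {G : Ω → δ} (hF : Measurable[⨆ i ∈ S, mβ.comap (f i)] F)
    (hG : Measurable[⨆ i ∈ T, mβ.comap (f i)] G) : IndepFun F G μ := by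
  rw [IndepFun_iff_Indep]
  exact indep_of_indep_of_le_right (indep_of_indep_of_le_left
    (indep_iSup_of_disjoint (fun i => (hmeas i).comap_le) hf.iIndep hST) hF.comap_le) hG.comap_le

end Probability

section Model

variable {Ω : Type*} [MeasurableSpace Ω] {μ : Measure Ω} {X : ℕ → Ω → ℝ}

lemma ae_forall_prime_eq_zero_or_eq_one [IsProbabilityMeasure μ]
    (hmeas : ∀ p : ℕ, p.Prime → Measurable (X p))
    (hone : ∀ p : ℕ, p.Prime → μ {ω | X p ω = 1} = ENNReal.ofReal (1 / p))
    (hzero : ∀ p : ℕ, p.Prime → μ {ω | X p ω = 0} = ENNReal.ofReal (1 - 1 / p)) :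
    ∀ᵐ ω ∂μ, ∀ r : ℕ, r.Prime → X r ω = 0 ∨ X r ω = 1 := by
  refine ae_all_iff.2 fun r => ?_
  by_cases hr : r.Prime
  · have hr₁ : (1 : ℝ) ≤ r := by exact_mod_cast hr.one_lt.le
    exact (ae_eq_zero_or_eq_one (hmeas r hr) (by positivity)
      (div_le_one_of_le₀ hr₁ (by positivity)) (hone r hr) (hzero r hr)).mono fun ω h _ => h
  · exact Eventually.of_forall fun ω h => absurd h hr

lemma memLp_B [IsProbabilityMeasure μ] (hmeas : ∀ p : ℕ, p.Prime → Measurable (X p))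
    (hX : ∀ᵐ ω ∂μ, ∀ r : ℕ, r.Prime → X r ω = 0 ∨ X r ω = 1) (z : ℝ) {p : ℕ} (hp : p.Prime) :
    MemLp (B z X p) 2 μ := by
  refine MemLp.of_bound
    (measurable_B fun r hr => hmeas r (prime_of_mem_insert_primesBetween hp hr)).aestronglyMeasurable
    1 (hX.mono fun ω hω => ?_)
  have hB : B z X p ω ∈ unitInterval := B_mem_unitInterval fun r hr => by
    rcases hω r (prime_of_mem_insert_primesBetween hp hr) with h | h <;> rw [h]
    exacts [unitInterval.zero_mem, unitInterval.one_mem]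
  rw [Real.norm_of_nonneg hB.1]
  exact hB.2

lemma indepFun_B_of_rpow_lt (hmeas : ∀ p : ℕ, p.Prime → Measurable (X p))
    (hindep : iIndepFun (fun p : {p : ℕ // p.Prime} => X p.1) μ) {z : ℝ} {p q : ℕ}
    (hp : p.Prime) (hq : q.Prime) (hpq : p < q) (hqz : (p : ℝ) ^ Real.exp z < q) :
    IndepFun (B z X p) (B z X q) μ := by
  refine hindep.indepFun_of_measurable_biSup (fun r => hmeas r r.2)
    (disjoint_compl_right (a := {r | r.1 < q})) (measurable_B fun r hr => ?_)
    (measurable_B fun r hr => ?_)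
  · exact measurable_biSup_comap (fun r : {p : ℕ // p.Prime} => X r.1)
      (i := ⟨r, prime_of_mem_insert_primesBetween hp hr⟩)
      (lt_of_mem_insert_primesBetween hpq hqz hr)
  · exact measurable_biSup_comap (fun r : {p : ℕ // p.Prime} => X r.1)
      (i := ⟨r, prime_of_mem_insert_primesBetween hq hr⟩)
      (not_lt.2 (self_le_of_mem_insert_primesBetween hr))

end Model

theorem covariance_Bp_Bq_general (z : ℝ)
    {Ω : Type*} [MeasurableSpace Ω] (μ : Measure Ω) [IsProbabilityMeasure μ]
    (X : ℕ → Ω → ℝ)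
    (hmeas : ∀ p : ℕ, p.Prime → Measurable (X p))
    (hindep : iIndepFun (fun p : {p : ℕ // p.Prime} => X p.1) μ)
    (hone : ∀ p : ℕ, p.Prime → μ {ω | X p ω = 1} = ENNReal.ofReal (1 / p))
    (hzero : ∀ p : ℕ, p.Prime → μ {ω | X p ω = 0} = ENNReal.ofReal (1 - 1 / p))
    (p q : ℕ) (hp : p.Prime) (hq : q.Prime) (hpq : p < q) :
    ((q : ℝ) ≤ (p : ℝ) ^ Real.exp z →
      ((∫ ω, (B z X p ω - ∫ ω', B z X p ω' ∂μ) * (B z X q ω - ∫ ω', B z X q ω' ∂μ) ∂μ)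
          = -((∫ ω, B z X p ω ∂μ) * (∫ ω, B z X q ω ∂μ)) ∧
        (∫ ω, B z X p ω * B z X q ω ∂μ) = 0)) ∧
    ((p : ℝ) ^ Real.exp z < (q : ℝ) →
      (IndepFun (B z X p) (B z X q) μ ∧
        (∫ ω, (B z X p ω - ∫ ω', B z X p ω' ∂μ) * (B z X q ω - ∫ ω', B z X q ω' ∂μ) ∂μ) = 0)) := by
  have hX := ae_forall_prime_eq_zero_or_eq_one hmeas hone hzero
  have hBp := memLp_B hmeas hX z hp
  have hBq := memLp_B hmeas hX z hq
  refine ⟨fun hqz => ?_, fun hqz => ?_⟩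
  · have hprod : ∫ ω, B z X p ω * B z X q ω ∂μ = 0 :=
      integral_eq_zero_of_ae <| hX.mono fun ω hω =>
        B_mul_B_eq_zero (mem_primesBetween.2 ⟨hq, hpq, hqz⟩) (hω q hq)
    refine ⟨?_, hprod⟩
    change cov[B z X p, B z X q; μ] = _
    rw [covariance_eq_sub hBp hBq, Pi.mul_def, hprod, zero_sub]
  · have hind := indepFun_B_of_rpow_lt hmeas hindep hp hq hpq hqz
    exact ⟨hind, hind.covariance_eq_zero hBp hBq⟩

theorem covariance_Bp_Bq (z : ℝ) (hz : 0 ≤ z)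
    {Ω : Type*} [MeasurableSpace Ω] (μ : Measure Ω) [IsProbabilityMeasure μ]
    (X : ℕ → Ω → ℝ)
    (hmeas : ∀ p : ℕ, p.Prime → Measurable (X p))
    (hindep : iIndepFun (fun p : {p : ℕ // p.Prime} => X p.1) μ)
    (hone : ∀ p : ℕ, p.Prime → μ {ω | X p ω = 1} = ENNReal.ofReal (1 / p))
    (hzero : ∀ p : ℕ, p.Prime → μ {ω | X p ω = 0} = ENNReal.ofReal (1 - 1 / p))
    (p q : ℕ) (hp : p.Prime) (hq : q.Prime) (hpq : p < q) :
    ((q : ℝ) ≤ (p : ℝ) ^ Real.exp z →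
      ((∫ ω, (B z X p ω - ∫ ω', B z X p ω' ∂μ) * (B z X q ω - ∫ ω', B z X q ω' ∂μ) ∂μ)
          = -((∫ ω, B z X p ω ∂μ) * (∫ ω, B z X q ω ∂μ)) ∧
        (∫ ω, B z X p ω * B z X q ω ∂μ) = 0)) ∧
    ((p : ℝ) ^ Real.exp z < (q : ℝ) →
      (IndepFun (B z X p) (B z X q) μ ∧
        (∫ ω, (B z X p ω - ∫ ω', B z X p ω' ∂μ) * (B z X q ω - ∫ ω', B z X q ω' ∂μ) ∂μ) = 0)) :=
  covariance_Bp_Bq_general z μ X hmeas hindep hone hzero p q hp hq hpq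
end

section
/- Fix z ≥ 0, a positive integer u and an exponent vector r = (r_1, …, r_u) ∈ ℕ^u (each r_i ≥ 1). Then for all primes p_1, …, p_u (not necessarily distinct), E[ ∏_{i=1}^{u} |B_{p_i} − E[B_{p_i}]|^{r_i} ] = O_{r,z}( 1 / rad(p_1 ⋯ p_u) ), where rad denotes the radical (the product of the distinct primes dividing the argument) and the implied constant depends only on r and z. -/
open MeasureTheory ProbabilityTheory Filter Finset
open scoped Classical ENNReal

/-!
Almost surely every `X_q` is `0` or `1`, so `0 ≤ B_p ≤ X_p`; hence `0 ≤ E[B_p] ≤ 1/p`, and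
`|B_p - E[B_p]|` is bounded both by `1` and by `X_p + 1/p`. Grouping the factors by the distinct
primes `q` among the `p_i`, the bound by `1` lets us lower every exponent `r_i ≥ 1` to a single
factor per `q`, and the other bound dominates the product by `∏_q (X_q + 1/q)`. By independence
its expectation is `∏_q 2/q ≤ 2^u / rad(p_1 ⋯ p_u)`.
-/

lemma Finset.prod_pow_le_prod_image {ι κ R : Type*} [DecidableEq κ]
    [CommSemiring R] [PartialOrder R] [IsOrderedRing R]
    (s : Finset ι) (f : ι → κ) (t : κ → R) (r : ι → ℕ)
    (ht : ∀ i ∈ s, 0 ≤ t (f i) ∧ t (f i) ≤ 1) (hr : ∀ i ∈ s, r i ≠ 0) :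
    ∏ i ∈ s, t (f i) ^ r i ≤ ∏ k ∈ s.image f, t k := by
  classical
  induction s using Finset.induction_on with
  | empty => simp
  | @insert a s ha ih =>
    have ht' : ∀ i ∈ s, 0 ≤ t (f i) ∧ t (f i) ≤ 1 := fun i hi =>
      ht i (mem_insert_of_mem hi)
    have ih := ih ht' fun i hi => hr i (mem_insert_of_mem hi)
    obtain ⟨hta0, hta1⟩ := ht a (mem_insert_self a s)
    have hprod : 0 ≤ ∏ k ∈ s.image f, t k := by
      refine prod_nonneg fun k hk => ?_
      obtain ⟨i, hi, rfl⟩ := mem_image.1 hk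
      exact (ht' i hi).1
    rw [prod_insert ha, image_insert]
    by_cases hfa : f a ∈ s.image f
    · rw [insert_eq_of_mem hfa]
      exact (mul_le_mul (pow_le_one₀ hta0 hta1) ih
        (prod_nonneg fun i hi => pow_nonneg (ht' i hi).1 _) zero_le_one).trans_eq (one_mul _)
    · rw [prod_insert hfa]
      exact mul_le_mul (pow_le_of_le_one hta0 hta1 (hr a (mem_insert_self a s))) ih
        (prod_nonneg fun i hi => pow_nonneg (ht' i hi).1 _) hta0

lemma Nat.primeFactors_prod_eq_image {ι : Type*} (s : Finset ι) (g : ι → ℕ)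
    (hg : ∀ i ∈ s, (g i).Prime) : (∏ i ∈ s, g i).primeFactors = s.image g := by
  have hne : ∏ i ∈ s, g i ≠ 0 := prod_ne_zero_iff.2 fun i hi => (hg i hi).ne_zero
  ext q
  rw [mem_primeFactors_of_ne_zero hne, mem_image]
  constructor
  · rintro ⟨hq, hdvd⟩
    obtain ⟨i, hi, hqi⟩ := (Prime.dvd_finsetProd_iff hq.prime _).1 hdvd
    exact ⟨i, hi, ((hg i hi).dvd_iff_eq hq.ne_one).1 hqi⟩
  · rintro ⟨i, hi, rfl⟩
    exact ⟨hg i hi, dvd_prod_of_mem g hi⟩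

section Probability

variable {Ω : Type*} [MeasurableSpace Ω] {μ : Measure Ω}

lemma iIndepFun.integral_finset_prod_of_subtype {ι : Type*} {P : ι → Prop}
    {f : ι → Ω → ℝ} (hf : iIndepFun (fun i : {i // P i} => f i) μ)
    (hmeas : ∀ i, P i → AEStronglyMeasurable (f i) μ) {s : Finset ι} (hs : ∀ i ∈ s, P i) :
    ∫ ω, ∏ i ∈ s, f i ω ∂μ = ∏ i ∈ s, ∫ ω, f i ω ∂μ := by
  have hincl : Function.Injective fun i : s => (⟨i, hs i i.2⟩ : {i // P i}) :=
    fun i j h => Subtype.ext (Subtype.ext_iff.1 h :)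
  simp_rw [← prod_coe_sort s]
  exact (hf.precomp hincl).integral_fun_prod_eq_prod_integral fun i => hmeas i (hs i i.2)

variable [IsProbabilityMeasure μ] {X : Ω → ℝ} {a : ℝ}

lemma ae_eq_zero_or_one_of_measure_eq (hX : Measurable X) (ha : a ∈ Set.Icc 0 1)
    (h1 : μ {ω | X ω = 1} = ENNReal.ofReal a)
    (h0 : μ {ω | X ω = 0} = ENNReal.ofReal (1 - a)) :
    ∀ᵐ ω ∂μ, X ω = 0 ∨ X ω = 1 := by
  have hm0 : MeasurableSet {ω | X ω = 0} := hX (measurableSet_singleton 0)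
  have hm1 : MeasurableSet {ω | X ω = 1} := hX (measurableSet_singleton 1)
  have hdisj : Disjoint {ω | X ω = 0} {ω | X ω = 1} :=
    Set.disjoint_left.2 fun ω h0 h1 => zero_ne_one (h0.symm.trans h1)
  rw [ae_iff_measure_eq (p := fun ω => X ω = 0 ∨ X ω = 1) (hm0.union hm1).nullMeasurableSet,
    Set.ofPred_or, measure_union hdisj hm1, h0, h1,
    ← ENNReal.ofReal_add (by linarith [ha.2]) ha.1, measure_univ]
  simp

lemma integral_eq_of_measure_eq (hX : Measurable X) (ha : a ∈ Set.Icc 0 1)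
    (h1 : μ {ω | X ω = 1} = ENNReal.ofReal a)
    (h0 : μ {ω | X ω = 0} = ENNReal.ofReal (1 - a)) :
    ∫ ω, X ω ∂μ = a := by
  have hind : X =ᵐ[μ] {ω | X ω = 1}.indicator 1 := by
    filter_upwards [ae_eq_zero_or_one_of_measure_eq hX ha h1 h0] with ω hω
    rcases hω with hω | hω <;> simp [hω]
  rw [integral_congr_ae hind,
    integral_indicator_one (s := {ω | X ω = 1}) (hX (measurableSet_singleton 1)),
    measureReal_def, h1, ENNReal.toReal_ofReal ha.1]

end Probability

lemma one_div_natCast_mem_Icc (n : ℕ) : (1 / n : ℝ) ∈ Set.Icc 0 1 :=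
  ⟨by positivity, by rw [one_div]; exact Nat.cast_inv_le_one n⟩

section RandomVariableB

variable {Ω : Type*} {X : ℕ → Ω → ℝ} {z : ℝ} {p : ℕ}

lemma B_mem_Icc {ω : Ω} (hX : ∀ q, q.Prime → X q ω ∈ Set.Icc 0 1) (hp : p.Prime) :
    B z X p ω ∈ Set.Icc 0 (X p ω) := by
  have hq : ∀ q ∈ primesBetween z p, 1 - X q ω ∈ Set.Icc 0 1 := fun q hq => by
    have := hX q (mem_filter.1 hq).2.1
    constructor <;> linarith [this.1, this.2]
  obtain ⟨hp0, -⟩ := hX p hp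
  exact ⟨mul_nonneg hp0 (prod_nonneg fun q h => (hq q h).1),
    mul_le_of_le_one_right hp0 (prod_le_one (fun q h => (hq q h).1) fun q h => (hq q h).2)⟩

variable [MeasurableSpace Ω] {μ : Measure Ω}

lemma ae_forall_prime_mem_Icc [IsProbabilityMeasure μ]
    (hmeas : ∀ p : ℕ, p.Prime → Measurable (X p))
    (hone : ∀ p : ℕ, p.Prime → μ {ω | X p ω = 1} = ENNReal.ofReal (1 / p))
    (hzero : ∀ p : ℕ, p.Prime → μ {ω | X p ω = 0} = ENNReal.ofReal (1 - 1 / p)) :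
    ∀ᵐ ω ∂μ, ∀ q, q.Prime → X q ω ∈ Set.Icc 0 1 := by
  have h01 : ∀ᵐ ω ∂μ, ∀ q : {q : ℕ // q.Prime}, X q ω = 0 ∨ X q ω = 1 :=
    ae_all_iff.2 fun q => ae_eq_zero_or_one_of_measure_eq (hmeas q q.2)
      (one_div_natCast_mem_Icc q) (hone q q.2) (hzero q q.2)
  filter_upwards [h01] with ω hω q hq
  rcases hω ⟨q, hq⟩ with h | h <;> simp [h]

lemma ae_abs_B_sub_integral_le (hX : ∀ᵐ ω ∂μ, ∀ q, q.Prime → X q ω ∈ Set.Icc 0 1)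
    (hp : p.Prime) (hEX : ∫ ω, X p ω ∂μ = 1 / p) :
    ∀ᵐ ω ∂μ, |B z X p ω - ∫ ω', B z X p ω' ∂μ| ≤ 1 ∧
      |B z X p ω - ∫ ω', B z X p ω' ∂μ| ≤ X p ω + 1 / p := by
  have hpos : (0 : ℝ) < 1 / p := one_div_pos.2 (Nat.cast_pos.2 hp.pos)
  have hB : ∀ᵐ ω ∂μ, B z X p ω ∈ Set.Icc 0 (X p ω) := hX.mono fun ω h => B_mem_Icc h hp
  have hXint : Integrable (X p) μ := .of_integral_ne_zero (hEX ▸ hpos.ne')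
  have hE0 : 0 ≤ ∫ ω, B z X p ω ∂μ := integral_nonneg_of_ae (hB.mono fun _ h => h.1)
  have hE1 : ∫ ω, B z X p ω ∂μ ≤ 1 / p :=
    hEX ▸ integral_mono_of_nonneg (hB.mono fun _ h => h.1) hXint (hB.mono fun _ h => h.2)
  have hp1 := (one_div_natCast_mem_Icc p).2
  filter_upwards [hB, hX] with ω hBω hXω
  obtain ⟨hXp0, hXp1⟩ := hXω p hp
  simp only [abs_le]
  refine ⟨⟨?_, ?_⟩, ?_, ?_⟩ <;> linarith [hBω.1, hBω.2]

lemma ae_prod_abs_B_sub_integral_pow_le {ι : Type*} [Fintype ι]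
    (hX : ∀ᵐ ω ∂μ, ∀ q, q.Prime → X q ω ∈ Set.Icc 0 1)
    (hEX : ∀ q : ℕ, q.Prime → ∫ ω, X q ω ∂μ = 1 / q)
    {p : ι → ℕ} (hp : ∀ i, (p i).Prime) {r : ι → ℕ} (hr : ∀ i, 1 ≤ r i) :
    ∀ᵐ ω ∂μ, ∏ i, |B z X (p i) ω - ∫ ω', B z X (p i) ω' ∂μ| ^ r i ≤
      ∏ q ∈ univ.image p, (X q ω + 1 / q) := by
  have hbound : ∀ᵐ ω ∂μ, ∀ i, |B z X (p i) ω - ∫ ω', B z X (p i) ω' ∂μ| ≤ 1 ∧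
      |B z X (p i) ω - ∫ ω', B z X (p i) ω' ∂μ| ≤ X (p i) ω + 1 / p i :=
    ae_all_iff.2 fun i => ae_abs_B_sub_integral_le hX (hp i) (hEX _ (hp i))
  filter_upwards [hbound] with ω hω
  calc ∏ i, |B z X (p i) ω - ∫ ω', B z X (p i) ω' ∂μ| ^ r i
      ≤ ∏ q ∈ univ.image p, |B z X q ω - ∫ ω', B z X q ω' ∂μ| :=
        prod_pow_le_prod_image univ p (fun q => |B z X q ω - ∫ ω', B z X q ω' ∂μ|) r
          (fun i _ => ⟨abs_nonneg _, (hω i).1⟩) fun i _ => Nat.one_le_iff_ne_zero.1 (hr i)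
    _ ≤ ∏ q ∈ univ.image p, (X q ω + 1 / q) := by
        refine prod_le_prod (fun _ _ => abs_nonneg _) fun q hq => ?_
        obtain ⟨i, -, rfl⟩ := mem_image.1 hq
        exact (hω i).2

lemma integral_prod_add_one_div (hindep : iIndepFun (fun p : {p : ℕ // p.Prime} => X p.1) μ)
    (hmeas : ∀ p : ℕ, p.Prime → Measurable (X p))
    (hEX : ∀ p : ℕ, p.Prime → ∫ ω, X p ω ∂μ = 1 / p)
    {T : Finset ℕ} (hT : ∀ q ∈ T, q.Prime) :
    ∫ ω, ∏ q ∈ T, (X q ω + 1 / q) ∂μ = ∏ q ∈ T, (2 / q : ℝ) := by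
  have := hindep.isProbabilityMeasure
  have hindep' := hindep.comp (fun q x => x + 1 / (q.1 : ℝ)) fun _ => measurable_add_const _
  rw [iIndepFun.integral_finset_prod_of_subtype (f := fun q ω => X q ω + 1 / q) hindep'
    (fun q hq => ((hmeas q hq).add_const _).aestronglyMeasurable) hT]
  refine prod_congr rfl fun q hq => ?_
  have hpos : (0 : ℝ) < 1 / q := one_div_pos.2 (Nat.cast_pos.2 (hT q hq).pos)
  have hXint : Integrable (X q) μ := .of_integral_ne_zero (hEX q (hT q hq) ▸ hpos.ne')
  rw [integral_add hXint (integrable_const _), hEX q (hT q hq), integral_const]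
  simp only [probReal_univ, one_smul]
  ring

end RandomVariableB

theorem moment_bound_radical_general (z : ℝ) (u : ℕ)
    (r : Fin u → ℕ) (hr : ∀ i, 1 ≤ r i)
    {Ω : Type*} [MeasurableSpace Ω] (μ : Measure Ω) [IsProbabilityMeasure μ]
    (X : ℕ → Ω → ℝ)
    (hmeas : ∀ p : ℕ, p.Prime → Measurable (X p))
    (hindep : iIndepFun (fun p : {p : ℕ // p.Prime} => X p.1) μ)
    (hone : ∀ p : ℕ, p.Prime → μ {ω | X p ω = 1} = ENNReal.ofReal (1 / p))
    (hzero : ∀ p : ℕ, p.Prime → μ {ω | X p ω = 0} = ENNReal.ofReal (1 - 1 / p))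
    :
    ∃ C : ℝ, 0 < C ∧ ∀ p : Fin u → ℕ, (∀ i, (p i).Prime) →
      |∫ ω, ∏ i, |B z X (p i) ω - ∫ ω', B z X (p i) ω' ∂μ| ^ (r i) ∂μ|
        ≤ C / ((∏ i, p i).primeFactors.prod fun q => (q : ℝ)) := by
  have hEX : ∀ q : ℕ, q.Prime → ∫ ω, X q ω ∂μ = 1 / q := fun q hq =>
    integral_eq_of_measure_eq (hmeas q hq) (one_div_natCast_mem_Icc q) (hone q hq) (hzero q hq)
  have hX := ae_forall_prime_mem_Icc hmeas hone hzero
  refine ⟨2 ^ u, by positivity, fun p hp => ?_⟩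
  have hT : ∀ q ∈ univ.image p, q.Prime := fun q hq => by
    obtain ⟨i, -, rfl⟩ := mem_image.1 hq
    exact hp i
  have hprod := integral_prod_add_one_div hindep hmeas hEX hT
  have hprod_pos : (0 : ℝ) < ∏ q ∈ univ.image p, (2 / q : ℝ) :=
    prod_pos fun q hq => div_pos two_pos (Nat.cast_pos.2 (hT q hq).pos)
  rw [Nat.primeFactors_prod_eq_image univ p fun i _ => hp i,
    abs_of_nonneg (integral_nonneg fun ω => prod_nonneg fun i _ => by positivity)]
  calc ∫ ω, ∏ i, |B z X (p i) ω - ∫ ω', B z X (p i) ω' ∂μ| ^ r i ∂μ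
      ≤ ∫ ω, ∏ q ∈ univ.image p, (X q ω + 1 / q) ∂μ :=
        -- the dominating integral is nonzero, so its integrand is integrable
        integral_mono_of_nonneg (.of_forall fun ω => prod_nonneg fun i _ => by positivity)
          (.of_integral_ne_zero (hprod ▸ hprod_pos.ne'))
          (ae_prod_abs_B_sub_integral_pow_le hX hEX hp hr)
    _ = 2 ^ #(univ.image p) / ∏ q ∈ univ.image p, (q : ℝ) := by
        rw [hprod, prod_div_distrib, prod_const]
    _ ≤ 2 ^ u / ∏ q ∈ univ.image p, (q : ℝ) := by
        gcongr
        · exact one_le_two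
        · exact card_image_le.trans_eq (card_fin u)

theorem moment_bound_radical (z : ℝ) (hz : 0 ≤ z) (u : ℕ) (hu : 0 < u)
    (r : Fin u → ℕ) (hr : ∀ i, 1 ≤ r i)
    {Ω : Type*} [MeasurableSpace Ω] (μ : Measure Ω) [IsProbabilityMeasure μ]
    (X : ℕ → Ω → ℝ)
    (hmeas : ∀ p : ℕ, p.Prime → Measurable (X p))
    (hindep : iIndepFun (fun p : {p : ℕ // p.Prime} => X p.1) μ)
    (hone : ∀ p : ℕ, p.Prime → μ {ω | X p ω = 1} = ENNReal.ofReal (1 / p))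
    (hzero : ∀ p : ℕ, p.Prime → μ {ω | X p ω = 0} = ENNReal.ofReal (1 - 1 / p))
    :
    ∃ C : ℝ, 0 < C ∧ ∀ p : Fin u → ℕ, (∀ i, (p i).Prime) →
      |∫ ω, ∏ i, |B z X (p i) ω - ∫ ω', B z X (p i) ω' ∂μ| ^ (r i) ∂μ|
        ≤ C / ((∏ i, p i).primeFactors.prod fun q => (q : ℝ)) :=
  moment_bound_radical_general z u r hr μ X hmeas hindep hone hzero
end
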